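/- Let ε ≥ 0 be a real number and let c₁, c₂ : ℝ → ℝ be ε-drift-bounded clocks on two machines, with valid synchronization records (s₁, m₁, r₁) and (s₂, m₂, r₂) respectively (sᵢ ≤ mᵢ ≤ rᵢ). Suppose an event occurs at real time t₁ on machine 1 with t₁ ≥ r₁ and yields the interval [L₁, U₁] with L₁ = m₁ + (c₁ t₁ − c₁ r₁)·(1 − ε), and a later event occurs at real time t₂ > t₁ on machine 2 with t₂ ≥ r₂ and yields the interval [L₂, U₂] with U₂ = m₂ + (c₂ t₂ − c₂ s₂)·(1 + ε). Then U₂ > L₁. (Global monotonicity of FaRMv2 time intervals: if an event at time [L₁, U₁] anywhere in the cluster happens before an event at time [L₂, U₂] anywhere in the cluster, then U₂ > L₁.) -/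

import Mathlib

/-!
Each interval contains the real time of its event: the upper bound read at `t` is at least
`t` and the lower bound at most `t`. Hence `L₁ ≤ t₁ < t₂ ≤ U₂`. For the lower bound with
`ε > 1` the factor `1 - ε` is negative, and the estimate instead uses that a drift-bounded
clock is monotone.
-/

/-- An ε-drift-bounded clock: a map from real (clock-master) time to local clock
readings whose rate relative to real time is within a factor `1 + ε`. -/
def DriftBoundedClock (ε : ℝ) (c : ℝ → ℝ) : Prop :=
  ∀ s t : ℝ, s ≤ t → (t - s) / (1 + ε) ≤ c t - c s ∧ c t - c s ≤ (1 + ε) * (t - s)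

namespace DriftBoundedClock

variable {ε : ℝ} {c : ℝ → ℝ} {s m r t : ℝ}

theorem sub_le_elapsed_mul_one_add (hc : DriftBoundedClock ε c) (hε : 0 ≤ ε) (hst : s ≤ t) :
    t - s ≤ (c t - c s) * (1 + ε) :=
  (div_le_iff₀ (by linarith)).mp (hc s t hst).1

theorem monotone (hc : DriftBoundedClock ε c) (hε : 0 ≤ ε) : Monotone c := fun s t hst =>
  sub_nonneg.mp ((div_nonneg (sub_nonneg.mpr hst) (by linarith)).trans (hc s t hst).1)

theorem elapsed_mul_one_sub_le (hc : DriftBoundedClock ε c) (hε : 0 ≤ ε) (hst : s ≤ t) :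
    (c t - c s) * (1 - ε) ≤ t - s := by
  rcases le_or_gt ε 1 with hε₁ | hε₁
  · calc (c t - c s) * (1 - ε) ≤ (1 + ε) * (t - s) * (1 - ε) :=
          mul_le_mul_of_nonneg_right (hc s t hst).2 (by linarith)
      _ = t - s - ε ^ 2 * (t - s) := by ring
      _ ≤ t - s := sub_le_self _ (mul_nonneg (sq_nonneg ε) (sub_nonneg.mpr hst))
  · calc (c t - c s) * (1 - ε) ≤ 0 :=
          mul_nonpos_of_nonneg_of_nonpos (sub_nonneg.mpr (hc.monotone hε hst)) (by linarith)
      _ ≤ t - s := sub_nonneg.mpr hst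

theorem le_upper_bound (hc : DriftBoundedClock ε c) (hε : 0 ≤ ε) (hsm : s ≤ m) (hst : s ≤ t) :
    t ≤ m + (c t - c s) * (1 + ε) := by
  linarith [hc.sub_le_elapsed_mul_one_add hε hst]

theorem lower_bound_le (hc : DriftBoundedClock ε c) (hε : 0 ≤ ε) (hmr : m ≤ r) (hrt : r ≤ t) :
    m + (c t - c r) * (1 - ε) ≤ t := by
  linarith [hc.elapsed_mul_one_sub_le hε hrt]

end DriftBoundedClock

theorem global_monotonicity_general (ε : ℝ) (hε : 0 ≤ ε)
    (c₁ c₂ : ℝ → ℝ)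
    (hc₁ : DriftBoundedClock ε c₁) (hc₂ : DriftBoundedClock ε c₂)
    (m₁ r₁ s₂ m₂ r₂ : ℝ)
    (hmr₁ : m₁ ≤ r₁)
    (hsm₂ : s₂ ≤ m₂) (hmr₂ : m₂ ≤ r₂)
    (t₁ t₂ L₁ U₂ : ℝ)
    (ht₁ : r₁ ≤ t₁) (ht₂ : r₂ ≤ t₂) (hlt : t₁ < t₂)
    (hL₁ : L₁ = m₁ + (c₁ t₁ - c₁ r₁) * (1 - ε))
    (hU₂ : U₂ = m₂ + (c₂ t₂ - c₂ s₂) * (1 + ε)) :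
    U₂ > L₁ := by
  subst hL₁ hU₂
  calc m₁ + (c₁ t₁ - c₁ r₁) * (1 - ε) ≤ t₁ := hc₁.lower_bound_le hε hmr₁ ht₁
    _ < t₂ := hlt
    _ ≤ m₂ + (c₂ t₂ - c₂ s₂) * (1 + ε) :=
      hc₂.le_upper_bound hε hsm₂ (hsm₂.trans (hmr₂.trans ht₂))

/-- Global monotonicity of FaRMv2 time intervals: if an event at time `[L₁, U₁]`
anywhere in the cluster happens before an event at time `[L₂, U₂]` anywhere in the
cluster, then `U₂ > L₁`. -/
theorem global_monotonicity (ε : ℝ) (hε : 0 ≤ ε)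
    (c₁ c₂ : ℝ → ℝ)
    (hc₁ : DriftBoundedClock ε c₁) (hc₂ : DriftBoundedClock ε c₂)
    (s₁ m₁ r₁ s₂ m₂ r₂ : ℝ)
    (hsm₁ : s₁ ≤ m₁) (hmr₁ : m₁ ≤ r₁)
    (hsm₂ : s₂ ≤ m₂) (hmr₂ : m₂ ≤ r₂)
    (t₁ t₂ L₁ U₂ : ℝ)
    (ht₁ : r₁ ≤ t₁) (ht₂ : r₂ ≤ t₂) (hlt : t₁ < t₂)
    (hL₁ : L₁ = m₁ + (c₁ t₁ - c₁ r₁) * (1 - ε))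
    (hU₂ : U₂ = m₂ + (c₂ t₂ - c₂ s₂) * (1 + ε)) :
    U₂ > L₁ :=
  global_monotonicity_general ε hε c₁ c₂ hc₁ hc₂ m₁ r₁ s₂ m₂ r₂ hmr₁ hsm₂ hmr₂ t₁ t₂ L₁ U₂ ht₁ ht₂
    hlt hL₁ hU₂
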